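/- Under the uniform ellipticity condition and the uniqueness condition, the bilinear form A_L(u,v) = ∫_Ω ( Σ_{i,j=1}^N a_{ij} (∂_{x_j}u)(∂_{x_i}v) + Σ_i ( b_i (∂_{x_i}u) v + c_i (∂_{x_i}v) u ) + d u v ) dx on W₀^{1,2}(Ω) is coercive with respect to the Dirichlet seminorm: there exists c₁ > 0 such that A_L(v,v) ≥ c₁ ∫_Ω |∇v|² dx for all v ∈ W₀^{1,2}(Ω). -/

import Mathlib

open MeasureTheory Metric Set Filter Topology
open scoped ENNReal NNReal Topology

noncomputable section

abbrev EucN (N : ℕ) := EuclideanSpace ℝ (Fin N)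

variable {N : ℕ}

/-- `ρ(x) = dist(x, ∂Ω)`, the distance to the boundary of `Ω`. -/
def rho (Ω : Set (EucN N)) (x : EucN N) : ℝ := Metric.infDist x (frontier Ω)

/-- The partial derivative `∂f/∂x_i` at `x`. -/
def pd (i : Fin N) (f : EucN N → ℝ) (x : EucN N) : ℝ :=
  fderiv ℝ f x (EuclideanSpace.single i 1)

/-- The formal adjoint `L*` of the divergence-form operator `L`:
`L*φ = Σ_{i,j} ∂_{x_j}(a_{ij} ∂_{x_i}φ) − Σ_j c_j ∂_{x_j}φ + Σ_j ∂_{x_j}(b_j φ) − dφ`. -/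
def Lstar (A : Fin N → Fin N → EucN N → ℝ) (b c : Fin N → EucN N → ℝ)
    (d : EucN N → ℝ) (φ : EucN N → ℝ) (x : EucN N) : ℝ :=
  (∑ i, ∑ j, pd j (fun y => A i j y * pd i φ y) x)
    - (∑ j, c j x * pd j φ x)
    + (∑ j, pd j (fun y => b j y * φ y) x)
    - d x * φ x

/-- The conormal derivative `∂φ/∂n_{L*} = Σ_{i,j} a_{ij} (∂_{x_i}φ) n_j`. -/
def conormal (A : Fin N → Fin N → EucN N → ℝ) (nv : EucN N → EucN N)
    (φ : EucN N → ℝ) (x : EucN N) : ℝ :=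
  ∑ i, ∑ j, A i j x * pd i φ x * nv x j

/-- The quantity `n · n Aᵀ = Σ_{i,j} a_{ji} n_i n_j`. -/
def nnA (A : Fin N → Fin N → EucN N → ℝ) (nv : EucN N → EucN N) (x : EucN N) : ℝ :=
  ∑ i, ∑ j, A j i x * nv x i * nv x j

/-- The `(N-1)`-dimensional Hausdorff (surface) measure. -/
def surf (N : ℕ) : Measure (EucN N) := Measure.hausdorffMeasure ((N : ℝ) - 1)

/-- The standing assumptions: `Ω` is a bounded domain, the coefficients are Lipschitz
continuous on `Ω`, the uniform ellipticity condition with constant `α`, and the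
uniqueness condition hold. -/
def EllipticSetting (Ω : Set (EucN N)) (A : Fin N → Fin N → EucN N → ℝ)
    (b c : Fin N → EucN N → ℝ) (d : EucN N → ℝ) (α : ℝ) : Prop :=
  IsOpen Ω ∧ Bornology.IsBounded Ω ∧ IsConnected Ω ∧
  (∀ i j, ∃ K : ℝ≥0, LipschitzOnWith K (A i j) Ω) ∧
  (∀ j, ∃ K : ℝ≥0, LipschitzOnWith K (b j) Ω) ∧
  (∀ j, ∃ K : ℝ≥0, LipschitzOnWith K (c j) Ω) ∧
  (∃ K : ℝ≥0, LipschitzOnWith K d Ω) ∧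
  0 < α ∧
  (∀ᵐ x ∂(volume.restrict Ω), ∀ ξ : EucN N,
      α * ‖ξ‖ ^ 2 ≤ ∑ i, ∑ j, A i j x * ξ i * ξ j) ∧
  (∀ v : EucN N → ℝ, ContDiff ℝ 1 v → HasCompactSupport v → tsupport v ⊆ Ω →
      (∀ x, 0 ≤ v x) →
      0 ≤ ∫ x in Ω, (d x * v x + ∑ j, (1 / 2 : ℝ) * (b j x + c j x) * pd j v x))

/-- The class `𝒢₀`: `g(x,·)` is continuous and nondecreasing, `g(x,0) = 0`, and
`g(·,t) ∈ L¹(Ω,ρ)` for every `t`. -/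
def MemG0 (Ω : Set (EucN N)) (g : EucN N → ℝ → ℝ) : Prop :=
  (∀ x ∈ Ω, Continuous fun t => g x t) ∧
  (∀ x ∈ Ω, Monotone fun t => g x t) ∧
  (∀ x ∈ Ω, g x 0 = 0) ∧
  (∀ t : ℝ, IntegrableOn (fun x => rho Ω x * g x t) Ω volume)

/-- Test functions `C_c^{2,L}(Ω̄)`: `φ ∈ C²(Ω̄)`, `φ = 0` on `∂Ω`, `L*φ ∈ L^∞(Ω)`. -/
def IsTestFun (Ω : Set (EucN N)) (A : Fin N → Fin N → EucN N → ℝ)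
    (b c : Fin N → EucN N → ℝ) (d : EucN N → ℝ) (φ : EucN N → ℝ) : Prop :=
  ContDiffOn ℝ 2 φ (closure Ω) ∧ (∀ x ∈ frontier Ω, φ x = 0) ∧
    ∃ M, ∀ x ∈ Ω, |Lstar A b c d φ x| ≤ M

/-- Very weak solution of `−Lu + g∘u = f` in `Ω`, `u = η` on `∂Ω` with `L¹` data. -/
def IsVWSolL1 (Ω : Set (EucN N)) (A : Fin N → Fin N → EucN N → ℝ)
    (b c : Fin N → EucN N → ℝ) (d : EucN N → ℝ) (nv : EucN N → EucN N)
    (g : EucN N → ℝ → ℝ) (f η u : EucN N → ℝ) : Prop :=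
  IntegrableOn u Ω volume ∧
  IntegrableOn (fun x => rho Ω x * g x (u x)) Ω volume ∧
  ∀ φ : EucN N → ℝ, IsTestFun Ω A b c d φ →
    (∫ x in Ω, (-(u x) * Lstar A b c d φ x + g x (u x) * φ x)) =
      (∫ x in Ω, f x * φ x) -
        ∫ x in frontier Ω, conormal A nv φ x * η x ∂(surf N)

/-- Integral of `φ` against the signed measure represented by the pair `(p, q)`. -/
def pInt (p q : Measure (EucN N)) (φ : EucN N → ℝ) : ℝ :=
  (∫ x, φ x ∂p) - (∫ x, φ x ∂q)

/-- The total variation distance between two (possibly infinite) measures;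
for `μ = p − q` this is the total variation norm `‖p − q‖`. -/
def tvDist (a b : Measure (EucN N)) : ℝ≥0∞ :=
  ⨆ (s : Set (EucN N)) (_ : MeasurableSet s), ((a s - b s) + (b sᶜ - a sᶜ))

/-- The measure `ρ·m`. -/
def wRho (Ω : Set (EucN N)) (m : Measure (EucN N)) : Measure (EucN N) :=
  m.withDensity fun x => ENNReal.ofReal (rho Ω x)

/-- Membership of the signed measure `(p, q)` in `𝔐(Ω,ρ)`. -/
def MemMRho (Ω : Set (EucN N)) (p q : Measure (EucN N)) : Prop :=
  p Ωᶜ = 0 ∧ q Ωᶜ = 0 ∧ p ⟂ₘ q ∧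
    (∫⁻ x, ENNReal.ofReal (rho Ω x) ∂(p + q)) < ⊤

/-- The norm in `𝔐(Ω,ρ)` of the signed measure `p − q`. -/
def normMRho (Ω : Set (EucN N)) (p q : Measure (EucN N)) : ℝ :=
  (tvDist (wRho Ω p) (wRho Ω q)).toReal

/-- Membership of the signed measure `(p, q)` in `𝔐(∂Ω)`. -/
def MemMBdry (Ω : Set (EucN N)) (p q : Measure (EucN N)) : Prop :=
  p (frontier Ω)ᶜ = 0 ∧ q (frontier Ω)ᶜ = 0 ∧ p ⟂ₘ q ∧
    p univ < ⊤ ∧ q univ < ⊤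

/-- The total variation norm in `𝔐(∂Ω)` of the signed measure `p − q`. -/
def normMBdry (p q : Measure (EucN N)) : ℝ := (tvDist p q).toReal

/-- Membership of the signed measure `(p, q)` in `𝔐(Ω̄)`. -/
def MemMBar (Ω : Set (EucN N)) (p q : Measure (EucN N)) : Prop :=
  p (closure Ω)ᶜ = 0 ∧ q (closure Ω)ᶜ = 0 ∧ p ⟂ₘ q ∧
    p univ < ⊤ ∧ q univ < ⊤

/-- Ordering of signed measures represented by pairs: `p₁ − n₁ ≤ p₂ − n₂`. -/
def pairLE (p₁ n₁ p₂ n₂ : Measure (EucN N)) : Prop :=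
  ∀ s : Set (EucN N), MeasurableSet s → p₁ s + n₂ s ≤ p₂ s + n₁ s

/-- Very weak solution of `−Lu + g∘u = μ` in `Ω`, `u = ν` on `∂Ω` with measure data,
the measures `μ, ν` being represented by the pairs `(μp, μn)` and `(νp, νn)`. -/
def IsVWSol (Ω : Set (EucN N)) (A : Fin N → Fin N → EucN N → ℝ)
    (b c : Fin N → EucN N → ℝ) (d : EucN N → ℝ) (nv : EucN N → EucN N)
    (g : EucN N → ℝ → ℝ) (μp μn νp νn : Measure (EucN N)) (u : EucN N → ℝ) : Prop :=
  IntegrableOn u Ω volume ∧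
  IntegrableOn (fun x => rho Ω x * g x (u x)) Ω volume ∧
  ∀ φ : EucN N → ℝ, IsTestFun Ω A b c d φ →
    (∫ x in Ω, (-(u x) * Lstar A b c d φ x + g x (u x) * φ x)) =
      pInt μp μn φ - pInt νp νn (fun x => conormal A nv φ x)

/-- `μ ∈ 𝔐^g(Ω)`: the problem with data `(μ, 0)` has a very weak solution. -/
def GoodInterior (Ω : Set (EucN N)) (A : Fin N → Fin N → EucN N → ℝ)
    (b c : Fin N → EucN N → ℝ) (d : EucN N → ℝ) (nv : EucN N → EucN N)
    (g : EucN N → ℝ → ℝ) (μp μn : Measure (EucN N)) : Prop :=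
  ∃ u, IsVWSol Ω A b c d nv g μp μn 0 0 u

/-- `ν ∈ 𝔐^g(∂Ω)`: the problem with data `(0, ν)` has a very weak solution. -/
def GoodBdry (Ω : Set (EucN N)) (A : Fin N → Fin N → EucN N → ℝ)
    (b c : Fin N → EucN N → ℝ) (d : EucN N → ℝ) (nv : EucN N → EucN N)
    (g : EucN N → ℝ → ℝ) (νp νn : Measure (EucN N)) : Prop :=
  ∃ u, IsVWSol Ω A b c d nv g 0 0 νp νn u

/-- Weak convergence `ν_n ⇀ ν` in `𝔐(∂Ω)`. -/
def WeakConvBdry (νp νn : ℕ → Measure (EucN N)) (ηp ηn : Measure (EucN N)) : Prop :=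
  ∀ h : EucN N → ℝ, Continuous h →
    Tendsto (fun n => pInt (νp n) (νn n) h) atTop (𝓝 (pInt ηp ηn h))

/-- Weak convergence `ρμ_n ⇀ τ` in `Ω̄`. -/
def WeakConvRho (Ω : Set (EucN N)) (μp μn : ℕ → Measure (EucN N))
    (τp τn : Measure (EucN N)) : Prop :=
  ∀ φ : EucN N → ℝ, Continuous φ →
    Tendsto (fun n => pInt (μp n) (μn n) fun x => φ x * rho Ω x) atTop
      (𝓝 (pInt τp τn φ))

/-- Weak convergence `ρ h_n ⇀ λ` in `Ω̄` for a sequence of functions `h_n ∈ L¹(Ω,ρ)`. -/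
def WeakConvRhoFun (Ω : Set (EucN N)) (h : ℕ → EucN N → ℝ)
    (lamP lamN : Measure (EucN N)) : Prop :=
  ∀ φ : EucN N → ℝ, Continuous φ →
    Tendsto (fun n => ∫ x in Ω, φ x * rho Ω x * h n x) atTop
      (𝓝 (pInt lamP lamN φ))

/-- The measure `(m/ρ)χ_Ω`. -/
def divRho (Ω : Set (EucN N)) (m : Measure (EucN N)) : Measure (EucN N) :=
  (m.restrict Ω).withDensity fun x => ENNReal.ofReal (rho Ω x)⁻¹

/-- The measure `(m/(n·nAᵀ))χ_{∂Ω}`. -/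
def divnnA (Ω : Set (EucN N)) (A : Fin N → Fin N → EucN N → ℝ)
    (nv : EucN N → EucN N) (m : Measure (EucN N)) : Measure (EucN N) :=
  (m.restrict (frontier Ω)).withDensity fun x => ENNReal.ofReal (nnA A nv x)⁻¹

/-- The measure on `Ω` with density the positive part of `h` w.r.t. Lebesgue measure. -/
def funMeas (Ω : Set (EucN N)) (h : EucN N → ℝ) : Measure (EucN N) :=
  (volume.restrict Ω).withDensity fun x => ENNReal.ofReal (h x)

/-- Membership in the local Sobolev space `W^{1,p}_loc(Ω)` (via a weak gradient). -/
def MemW1pLoc (Ω : Set (EucN N)) (p : ℝ≥0∞) (u : EucN N → ℝ) : Prop :=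
  ∃ v : Fin N → EucN N → ℝ,
    (∀ i, ∀ φ : EucN N → ℝ, ContDiff ℝ (⊤ : ℕ∞) φ → HasCompactSupport φ →
      tsupport φ ⊆ Ω →
      ∫ x in Ω, u x * pd i φ x = -∫ x in Ω, v i x * φ x) ∧
    ∀ K : Set (EucN N), IsCompact K → K ⊆ Ω →
      MemLp u p (volume.restrict K) ∧ ∀ i, MemLp (v i) p (volume.restrict K)

/-- Membership in `W₀^{1,2}(Ω)` with weak gradient `w`: `v, w ∈ L²(Ω)` and `v` is
approximable in the `W^{1,2}` norm by smooth compactly supported functions. -/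
def MemW012 (Ω : Set (EucN N)) (v : EucN N → ℝ) (w : Fin N → EucN N → ℝ) : Prop :=
  MemLp v 2 (volume.restrict Ω) ∧ (∀ i, MemLp (w i) 2 (volume.restrict Ω)) ∧
  ∃ φ : ℕ → EucN N → ℝ,
    (∀ k, ContDiff ℝ (⊤ : ℕ∞) (φ k) ∧ HasCompactSupport (φ k) ∧ tsupport (φ k) ⊆ Ω) ∧
    Tendsto (fun k => ∫ x in Ω, |φ k x - v x| ^ 2) atTop (𝓝 0) ∧
    ∀ i, Tendsto (fun k => ∫ x in Ω, |pd i (φ k) x - w i x| ^ 2) atTop (𝓝 0)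

/-- `u` possesses `M`-boundary trace `ν = (νp, νn)` on `∂Ω`. -/
def HasMTrace (Ω : Set (EucN N)) (u : EucN N → ℝ) (νp νn : Measure (EucN N)) : Prop :=
  ∀ Ωn : ℕ → Set (EucN N),
    (∀ n, IsOpen (Ωn n)) → (∀ n, closure (Ωn n) ⊆ Ωn (n + 1)) →
    (⋃ n, Ωn n) = Ω →
    ∀ h : EucN N → ℝ, Continuous h →
      Tendsto (fun n => ∫ x in frontier (Ωn n), u x * h x ∂(surf N)) atTop
        (𝓝 (pInt νp νn h))

/-- Convergence `u_n → u` in `L¹(Ω)`. -/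
def TendstoL1 (Ω : Set (EucN N)) (un : ℕ → EucN N → ℝ) (u : EucN N → ℝ) : Prop :=
  Tendsto (fun n => ∫ x in Ω, |un n x - u x|) atTop (𝓝 0)

/-- The growth condition `lim_{a,t→∞} g(x,at)/(a g(x,t)) = ∞` uniformly in `x ∈ Ω`. -/
def GrowthCond (Ω : Set (EucN N)) (g : EucN N → ℝ → ℝ) : Prop :=
  ∀ C : ℝ, ∃ a₀ t₀ : ℝ, 1 < a₀ ∧ 1 < t₀ ∧
    ∀ x ∈ Ω, ∀ a ≥ a₀, ∀ t ≥ t₀, C * (a * g x t) ≤ g x (a * t)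

/-!
Take `c₁ = α`. Ellipticity bounds the principal part of the integrand below by `α |∇v|²`
pointwise, so it remains to see that the lower-order part `∫ Σᵢ (bᵢ + cᵢ) ∂ᵢv v + d v²` is
nonnegative. For `v = φ ∈ C_c^∞(Ω)` this is the uniqueness condition tested with `φ²`, because
`½ ∂ᵢ(φ²) = φ ∂ᵢφ`. The coefficients are Lipschitz on the bounded set `Ω`, hence bounded, so the
lower-order form is continuous for `W^{1,2}` convergence and nonnegativity passes to the limit
`v ∈ W₀^{1,2}(Ω)`.
-/

section SquareIntegrable

variable {X : Type*} [MeasurableSpace X] {μ : Measure X}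

theorem integral_abs_mul_le_sqrt_mul_sqrt {f g : X → ℝ} (hf : MemLp f 2 μ) (hg : MemLp g 2 μ) :
    ∫ x, |f x * g x| ∂μ ≤ √(∫ x, f x ^ 2 ∂μ) * √(∫ x, g x ^ 2 ∂μ) := by
  have h2 : ENNReal.ofReal 2 = 2 := by norm_num
  have hHolder := integral_mul_norm_le_Lp_mul_Lq (μ := μ) .two_two (h2 ▸ hf) (h2 ▸ hg)
  rw [Real.sqrt_eq_rpow, Real.sqrt_eq_rpow]
  simpa only [Real.norm_eq_abs, ← abs_mul, Real.rpow_two, sq_abs] using hHolder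

theorem integrable_mul_mul {e f g : X → ℝ} (he : MemLp e ∞ μ) (hf : MemLp f 2 μ)
    (hg : MemLp g 2 μ) : Integrable (fun x => e x * f x * g x) μ :=
  (hf.mul' he : MemLp (fun x => e x * f x) 2 μ).integrable_mul hg

theorem tendsto_integral_abs_mul_of_tendsto_integral_sq {p q : ℕ → X → ℝ} {P : ℝ}
    (hp : ∀ k, MemLp (p k) 2 μ) (hq : ∀ k, MemLp (q k) 2 μ)
    (hP : Tendsto (fun k => ∫ x, p k x ^ 2 ∂μ) atTop (𝓝 P))
    (hQ : Tendsto (fun k => ∫ x, q k x ^ 2 ∂μ) atTop (𝓝 0)) :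
    Tendsto (fun k => ∫ x, |p k x * q k x| ∂μ) atTop (𝓝 0) := by
  have hbound := hP.sqrt.mul hQ.sqrt
  rw [Real.sqrt_zero, mul_zero] at hbound
  exact squeeze_zero (fun k => integral_nonneg fun x => abs_nonneg _)
    (fun k => integral_abs_mul_le_sqrt_mul_sqrt (hp k) (hq k)) hbound

theorem tendsto_integral_mul_of_tendsto_integral_sq_sub {f g : X → ℝ} {fk gk : ℕ → X → ℝ}
    (hf : MemLp f 2 μ) (hg : MemLp g 2 μ) (hfk : ∀ k, MemLp (fk k) 2 μ)
    (hgk : ∀ k, MemLp (gk k) 2 μ)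
    (hfc : Tendsto (fun k => ∫ x, |fk k x - f x| ^ 2 ∂μ) atTop (𝓝 0))
    (hgc : Tendsto (fun k => ∫ x, |gk k x - g x| ^ 2 ∂μ) atTop (𝓝 0)) :
    Tendsto (fun k => ∫ x, gk k x * fk k x ∂μ) atTop (𝓝 (∫ x, g x * f x ∂μ)) := by
  simp only [sq_abs] at hfc hgc
  have hI : ∀ {p q : X → ℝ}, MemLp p 2 μ → MemLp q 2 μ → Integrable (fun x => p x * q x) μ :=
    fun hp hq => hp.integrable_mul hq
  have hdf : ∀ k, MemLp (fun x => fk k x - f x) 2 μ := fun k => (hfk k).sub hf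
  have hdg : ∀ k, MemLp (fun x => gk k x - g x) 2 μ := fun k => (hgk k).sub hg
  have hbound : ∀ k, ‖∫ x, gk k x * fk k x ∂μ - ∫ x, g x * f x ∂μ‖ ≤
      ∫ x, |(gk k x - g x) * (fk k x - f x)| ∂μ + ∫ x, |f x * (gk k x - g x)| ∂μ
        + ∫ x, |g x * (fk k x - f x)| ∂μ := by
    intro k
    have h₁ := (hI (hdg k) (hdf k)).abs
    have h₂ := (hI hf (hdg k)).abs
    have h₃ := (hI hg (hdf k)).abs
    rw [← integral_sub (hI (hgk k) (hfk k)) (hI hg hf), ← integral_add h₁ h₂,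
      ← integral_add (h₁.fun_add h₂) h₃]
    refine (norm_integral_le_integral_norm _).trans (integral_mono_of_nonneg
      (.of_forall fun x => norm_nonneg _) ((h₁.fun_add h₂).fun_add h₃) (.of_forall fun x => ?_))
    calc ‖gk k x * fk k x - g x * f x‖
        = |(gk k x - g x) * (fk k x - f x) + f x * (gk k x - g x) + g x * (fk k x - f x)| := by
          rw [Real.norm_eq_abs]; congr 1; ring
      _ ≤ _ := abs_add_three _ _ _
  rw [tendsto_iff_norm_sub_tendsto_zero]
  refine squeeze_zero (fun k => norm_nonneg _) hbound ?_
  simpa using ((tendsto_integral_abs_mul_of_tendsto_integral_sq hdg hdf hgc hfc).add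
    (tendsto_integral_abs_mul_of_tendsto_integral_sq (fun _ => hf) hdg tendsto_const_nhds hgc)).add
    (tendsto_integral_abs_mul_of_tendsto_integral_sq (fun _ => hg) hdf tendsto_const_nhds hfc)

theorem tendsto_integral_sq_mul_sub_mul {e g : X → ℝ} {gk : ℕ → X → ℝ} (he : MemLp e ∞ μ)
    (hg : MemLp g 2 μ) (hgk : ∀ k, MemLp (gk k) 2 μ)
    (hgc : Tendsto (fun k => ∫ x, |gk k x - g x| ^ 2 ∂μ) atTop (𝓝 0)) :
    Tendsto (fun k => ∫ x, |e x * gk k x - e x * g x| ^ 2 ∂μ) atTop (𝓝 0) := by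
  simp only [sq_abs] at hgc ⊢
  set M := lpNorm e ∞ μ
  have hbound : ∀ k, ∫ x, (e x * gk k x - e x * g x) ^ 2 ∂μ ≤
      M ^ 2 * ∫ x, (gk k x - g x) ^ 2 ∂μ := by
    intro k
    rw [← integral_const_mul]
    refine integral_mono_ae (((hgk k).mul' he).sub (hg.mul' he)).integrable_sq
      (((hgk k).sub hg).integrable_sq.const_mul (M ^ 2)) ?_
    filter_upwards [ae_le_lpNorm_exponent_top he] with x hx
    rw [← mul_sub, mul_pow]
    refine mul_le_mul_of_nonneg_right ?_ (sq_nonneg _)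
    simpa only [Real.norm_eq_abs, sq_abs] using pow_le_pow_left₀ (norm_nonneg _) hx 2
  exact squeeze_zero (fun k => integral_nonneg fun x => sq_nonneg _) hbound
    (by simpa using hgc.const_mul (M ^ 2))

theorem tendsto_integral_mul_mul_of_tendsto_integral_sq_sub {e f g : X → ℝ}
    {fk gk : ℕ → X → ℝ} (he : MemLp e ∞ μ) (hf : MemLp f 2 μ) (hg : MemLp g 2 μ)
    (hfk : ∀ k, MemLp (fk k) 2 μ) (hgk : ∀ k, MemLp (gk k) 2 μ)
    (hfc : Tendsto (fun k => ∫ x, |fk k x - f x| ^ 2 ∂μ) atTop (𝓝 0))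
    (hgc : Tendsto (fun k => ∫ x, |gk k x - g x| ^ 2 ∂μ) atTop (𝓝 0)) :
    Tendsto (fun k => ∫ x, e x * gk k x * fk k x ∂μ) atTop (𝓝 (∫ x, e x * g x * f x ∂μ)) :=
  tendsto_integral_mul_of_tendsto_integral_sq_sub hf (hg.mul' he) hfk (fun k => (hgk k).mul' he)
    hfc (tendsto_integral_sq_mul_sub_mul he hg hgk hgc)

end SquareIntegrable

theorem LipschitzOnWith.isBounded_image {X Y : Type*} [PseudoMetricSpace X] [PseudoMetricSpace Y]
    {K : ℝ≥0} {f : X → Y} {s : Set X} (hf : LipschitzOnWith K f s) (hs : Bornology.IsBounded s) :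
    Bornology.IsBounded (f '' s) := by
  obtain ⟨C, hC⟩ := isBounded_iff.1 hs
  refine isBounded_iff.2 ⟨K * C, ?_⟩
  rintro _ ⟨x, hx, rfl⟩ _ ⟨y, hy, rfl⟩
  exact (hf.dist_le_mul x hx y hy).trans (by gcongr; exact hC hx hy)

theorem LipschitzOnWith.memLp_top_restrict {X : Type*} [PseudoMetricSpace X] [MeasurableSpace X]
    [OpensMeasurableSpace X] {K : ℝ≥0} {f : X → ℝ} {s : Set X} (hf : LipschitzOnWith K f s)
    (hs : Bornology.IsBounded s) (hsm : MeasurableSet s) (μ : Measure X) :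
    MemLp f ∞ (μ.restrict s) := by
  obtain ⟨C, hC⟩ := (hf.isBounded_image hs).exists_norm_le
  exact memLp_top_of_bound (hf.continuousOn.aestronglyMeasurable hsm) C
    (ae_restrict_of_forall_mem hsm fun x hx => hC _ (mem_image_of_mem f hx))

theorem integral_sum_sq_le_of_ellipticity {X ι : Type*} [MeasurableSpace X] [Fintype ι]
    {μ : Measure X} {A : ι → ι → X → ℝ} {w : ι → X → ℝ} {α : ℝ}
    (hell : ∀ᵐ x ∂μ, ∀ ξ : EuclideanSpace ℝ ι, α * ‖ξ‖ ^ 2 ≤ ∑ i, ∑ j, A i j x * ξ i * ξ j)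
    (hA : ∀ i j, MemLp (A i j) ∞ μ) (hw : ∀ i, MemLp (w i) 2 μ) :
    α * ∫ x, ∑ i, w i x ^ 2 ∂μ ≤ ∫ x, ∑ i, ∑ j, A i j x * w j x * w i x ∂μ := by
  rw [← integral_const_mul]
  refine integral_mono_ae ((integrable_finsetSum _ fun i _ => (hw i).integrable_sq).const_mul α)
    (integrable_finsetSum _ fun i _ => integrable_finsetSum _ fun j _ =>
      integrable_mul_mul (hA i j) (hw j) (hw i)) ?_
  filter_upwards [hell] with x hx
  have hξ := hx (WithLp.toLp 2 fun i => w i x)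
  simp only [EuclideanSpace.norm_sq_eq, Real.norm_eq_abs, sq_abs] at hξ
  exact hξ.trans_eq (Finset.sum_congr rfl fun i _ => Finset.sum_congr rfl fun j _ => by ring)

/-- The lower-order part of the integrand of `A_L(u, u)`, with `g` in the role of `∇u`. -/
def lowerOrderIntegrand {X ι : Type*} [Fintype ι] (b c : ι → X → ℝ) (d u : X → ℝ)
    (g : ι → X → ℝ) (x : X) : ℝ :=
  ∑ i, (b i x * g i x * u x + c i x * g i x * u x) + d x * u x * u x

section LowerOrder

variable {X ι : Type*} [MeasurableSpace X] [Fintype ι] {μ : Measure X} {b c : ι → X → ℝ}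
  {d : X → ℝ}

theorem integral_lowerOrderIntegrand {u : X → ℝ} {g : ι → X → ℝ}
    (hb : ∀ i, MemLp (b i) ∞ μ) (hc : ∀ i, MemLp (c i) ∞ μ) (hd : MemLp d ∞ μ)
    (hu : MemLp u 2 μ) (hg : ∀ i, MemLp (g i) 2 μ) :
    ∫ x, lowerOrderIntegrand b c d u g x ∂μ =
      ∑ i, (∫ x, b i x * g i x * u x ∂μ + ∫ x, c i x * g i x * u x ∂μ)
        + ∫ x, d x * u x * u x ∂μ := by
  have hbi := fun i => integrable_mul_mul (hb i) (hg i) hu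
  have hci := fun i => integrable_mul_mul (hc i) (hg i) hu
  unfold lowerOrderIntegrand
  rw [integral_add (integrable_finsetSum _ fun i _ => (hbi i).fun_add (hci i))
      (integrable_mul_mul hd hu hu), integral_finsetSum _ fun i _ => (hbi i).fun_add (hci i)]
  simp only [integral_add (hbi _) (hci _)]

theorem integrable_lowerOrderIntegrand {u : X → ℝ} {g : ι → X → ℝ}
    (hb : ∀ i, MemLp (b i) ∞ μ) (hc : ∀ i, MemLp (c i) ∞ μ) (hd : MemLp d ∞ μ)
    (hu : MemLp u 2 μ) (hg : ∀ i, MemLp (g i) 2 μ) :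
    Integrable (lowerOrderIntegrand b c d u g) μ :=
  (integrable_finsetSum _ fun i _ =>
    (integrable_mul_mul (hb i) (hg i) hu).add (integrable_mul_mul (hc i) (hg i) hu)).add
      (integrable_mul_mul hd hu hu)

theorem tendsto_integral_lowerOrderIntegrand {u : X → ℝ} {g : ι → X → ℝ} {uk : ℕ → X → ℝ}
    {gk : ℕ → ι → X → ℝ} (hb : ∀ i, MemLp (b i) ∞ μ) (hc : ∀ i, MemLp (c i) ∞ μ)
    (hd : MemLp d ∞ μ) (hu : MemLp u 2 μ) (hg : ∀ i, MemLp (g i) 2 μ)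
    (huk : ∀ k, MemLp (uk k) 2 μ) (hgk : ∀ k i, MemLp (gk k i) 2 μ)
    (huc : Tendsto (fun k => ∫ x, |uk k x - u x| ^ 2 ∂μ) atTop (𝓝 0))
    (hgc : ∀ i, Tendsto (fun k => ∫ x, |gk k i x - g i x| ^ 2 ∂μ) atTop (𝓝 0)) :
    Tendsto (fun k => ∫ x, lowerOrderIntegrand b c d (uk k) (gk k) x ∂μ) atTop
      (𝓝 (∫ x, lowerOrderIntegrand b c d u g x ∂μ)) := by
  simp only [integral_lowerOrderIntegrand hb hc hd hu hg,
    integral_lowerOrderIntegrand hb hc hd (huk _) (hgk _)]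
  have hT := fun {e : X → ℝ} (he : MemLp e ∞ μ) i =>
    tendsto_integral_mul_mul_of_tendsto_integral_sq_sub he hu (hg i) huk (fun k => hgk k i) huc
      (hgc i)
  exact (tendsto_finsetSum _ fun i _ => (hT (hb i) i).add (hT (hc i) i)).add
    (tendsto_integral_mul_mul_of_tendsto_integral_sq_sub hd hu hu huk huk huc huc)

end LowerOrder

theorem pd_mul_self {φ : EucN N → ℝ} {x : EucN N} (hφ : DifferentiableAt ℝ φ x) (j : Fin N) :
    pd j (fun y => φ y * φ y) x = 2 * φ x * pd j φ x := by
  simp only [pd, fderiv_fun_mul hφ hφ, add_apply, smul_apply, smul_eq_mul]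
  ring

theorem memLp_pd {φ : EucN N → ℝ} (hφ : ContDiff ℝ 1 φ) (hcs : HasCompactSupport φ) (i : Fin N)
    (μ : Measure (EucN N)) [IsFiniteMeasureOnCompacts μ] : MemLp (pd i φ) 2 μ :=
  ((hφ.continuous_fderiv one_ne_zero).clm_apply continuous_const).memLp_of_hasCompactSupport
    (hcs.fderiv_apply ℝ _)

def UniquenessCondition (Ω : Set (EucN N)) (b c : Fin N → EucN N → ℝ) (d : EucN N → ℝ) : Prop :=
  ∀ v : EucN N → ℝ, ContDiff ℝ 1 v → HasCompactSupport v → tsupport v ⊆ Ω →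
    (∀ x, 0 ≤ v x) →
    0 ≤ ∫ x in Ω, (d x * v x + ∑ j, (1 / 2 : ℝ) * (b j x + c j x) * pd j v x)

theorem UniquenessCondition.integral_lowerOrderIntegrand_nonneg {Ω : Set (EucN N)}
    {b c : Fin N → EucN N → ℝ} {d : EucN N → ℝ} (huniq : UniquenessCondition Ω b c d)
    {φ : EucN N → ℝ} (hφ : ContDiff ℝ 1 φ) (hcs : HasCompactSupport φ) (hΩ : tsupport φ ⊆ Ω) :
    0 ≤ ∫ x in Ω, lowerOrderIntegrand b c d φ (fun i => pd i φ) x := by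
  have h := huniq (fun y => φ y * φ y) (hφ.mul hφ) hcs.mul_right
    (tsupport_mul_subset_left.trans hΩ) fun x => mul_self_nonneg _
  refine h.trans_eq (integral_congr_ae (.of_forall fun x => ?_))
  simp only [lowerOrderIntegrand, pd_mul_self (hφ.differentiable one_ne_zero x)]
  rw [add_comm]
  congr 1
  · exact Finset.sum_congr rfl fun j _ => by ring
  · ring

theorem stmt_3 {N : ℕ}
    (Ω : Set (EucN N)) (A : Fin N → Fin N → EucN N → ℝ)
    (b c : Fin N → EucN N → ℝ) (d : EucN N → ℝ) (α : ℝ)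
    (hset : EllipticSetting Ω A b c d α) :
    ∃ c₁ > (0 : ℝ), ∀ v : EucN N → ℝ, ∀ w : Fin N → EucN N → ℝ,
      MemW012 Ω v w →
      c₁ * (∫ x in Ω, ∑ i, (w i x) ^ 2) ≤
        ∫ x in Ω, ((∑ i, ∑ j, A i j x * w j x * w i x)
          + (∑ i, (b i x * w i x * v x + c i x * w i x * v x))
          + d x * v x * v x) := by
  obtain ⟨hopen, hbdd, -, hA, hb, hc, hd, hα, hell, huniq⟩ := hset
  have hcoeff : ∀ {f : EucN N → ℝ}, (∃ K, LipschitzOnWith K f Ω) → MemLp f ∞ (volume.restrict Ω) :=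
    fun ⟨_, hK⟩ => hK.memLp_top_restrict hbdd hopen.measurableSet volume
  refine ⟨α, hα, fun v w ⟨hv, hw, φ, hφ, hφv, hφw⟩ => ?_⟩
  have hφ2 : ∀ k, MemLp (φ k) 2 (volume.restrict Ω) := fun k =>
    ((hφ k).1.continuous.memLp_of_hasCompactSupport (hφ k).2.1).restrict Ω
  have hφ1 : ∀ k, ContDiff ℝ 1 (φ k) := fun k => (hφ k).1.of_le (by simp)
  have hpd2 : ∀ k i, MemLp (pd i (φ k)) 2 (volume.restrict Ω) := fun k i =>
    (memLp_pd (hφ1 k) (hφ k).2.1 i volume).restrict Ω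
  have hlower : 0 ≤ ∫ x in Ω, lowerOrderIntegrand b c d v w x :=
    ge_of_tendsto' (tendsto_integral_lowerOrderIntegrand (fun i => hcoeff (hb i))
      (fun i => hcoeff (hc i)) (hcoeff hd) hv hw hφ2 hpd2 hφv hφw) fun k =>
      UniquenessCondition.integral_lowerOrderIntegrand_nonneg huniq (hφ1 k) (hφ k).2.1
        (hφ k).2.2
  calc α * ∫ x in Ω, ∑ i, w i x ^ 2
      ≤ ∫ x in Ω, ∑ i, ∑ j, A i j x * w j x * w i x :=
        integral_sum_sq_le_of_ellipticity hell (fun i j => hcoeff (hA i j)) hw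
    _ ≤ (∫ x in Ω, ∑ i, ∑ j, A i j x * w j x * w i x)
          + ∫ x in Ω, lowerOrderIntegrand b c d v w x :=
        le_add_of_nonneg_right hlower
    _ = _ := by
        rw [← integral_add (integrable_finsetSum _ fun i _ => integrable_finsetSum _ fun j _ =>
          integrable_mul_mul (hcoeff (hA i j)) (hw j) (hw i)) (integrable_lowerOrderIntegrand
            (fun i => hcoeff (hb i)) (fun i => hcoeff (hc i)) (hcoeff hd) hv hw)]
        simp only [lowerOrderIntegrand, add_assoc]

end
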